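/- Suppose the data (x,u) satisfy the standing data assumptions and let δ > 0 be such that T/δ is a positive integer. Then for every L ≥ 0, Σ(Q) ∩ M^L_{x,u} ⊆ Σ^δ(Q + (1/2)δTL·I_n). Moreover, if the true noise signal w(t) = ẋ(t) − A_s x(t) − B_s u(t) is L-square Lipschitz, then (A_s, B_s) ∈ Σ(Q) ∩ M^L_{x,u}, so in particular Σ(Q) ∩ M^L_{x,u} is nonempty. -/

import Mathlib

/-
On each sampling interval `[kδ, (k+1)δ]` the square-Lipschitz bound gives, for every direction `y`,
`(w(kδ)·y)² ≤ (w(t)·y)² + L‖y‖²(t - kδ)`. Integrating over the interval and summing over `k`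
bounds the sampled quadratic form `δ Σₖ (w(kδ)·y)²` by `∫₀ᵀ (w·y)² + δTL‖y‖²/2`, i.e. the sampled
Gram matrix by the continuous one plus `(δTL/2) I`; the latter is `≤ Q + (δTL/2) I` on `Σ(Q)`.
The same Lipschitz bound makes `w wᵀ` continuous, so all the integrals involved exist.
-/

open MeasureTheory Matrix

noncomputable def opNorm {ι κ : Type} [Fintype ι] [Fintype κ] [DecidableEq κ]
    (M : Matrix ι κ ℝ) : ℝ :=
  ‖LinearMap.toContinuousLinearMap (Matrix.toEuclideanLin M)‖

noncomputable def euclNorm {ι : Type} [Fintype ι] (v : ι → ℝ) : ℝ :=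
  Real.sqrt (∑ i, v i ^ 2)

/-- `v` is `L`-square Lipschitz on `[0,T]`. -/
def SqLipschitz {ι : Type} [Fintype ι] [DecidableEq ι] (T L : ℝ) (v : ℝ → ι → ℝ) : Prop :=
  ∀ t₁ ∈ Set.Icc (0:ℝ) T, ∀ t₂ ∈ Set.Icc (0:ℝ) T,
    opNorm (Matrix.vecMulVec (v t₁) (v t₁) - Matrix.vecMulVec (v t₂) (v t₂)) ≤ L * |t₁ - t₂|

/-- The set of all partition sums appearing in the definition of total square variation. -/
def partitionSums {ι : Type} [Fintype ι] [DecidableEq ι] (T : ℝ) (v : ℝ → ι → ℝ) : Set ℝ :=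
  { s | ∃ (N : ℕ) (t : Fin (N + 1) → ℝ), Monotone t ∧ t 0 = 0 ∧ t (Fin.last N) = T ∧
      s = ∑ i : Fin N, opNorm (Matrix.vecMulVec (v (t i.succ)) (v (t i.succ)) -
            Matrix.vecMulVec (v (t i.castSucc)) (v (t i.castSucc))) }

/-- Total square variation `V_0^T(v)`. -/
noncomputable def totalSqVar {ι : Type} [Fintype ι] [DecidableEq ι] (T : ℝ) (v : ℝ → ι → ℝ) : ℝ :=
  sSup (partitionSums T v)

/-- `V_0^T(v) ≤ c`, phrased via all partition sums. -/
def TotalSqVarLE {ι : Type} [Fintype ι] [DecidableEq ι] (T : ℝ) (v : ℝ → ι → ℝ) (c : ℝ) : Prop :=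
  ∀ s ∈ partitionSums T v, s ≤ c

/-- Loewner order `M ≤ N`. -/
def loewnerLE {ι : Type} [Fintype ι] (M N : Matrix ι ι ℝ) : Prop := (N - M).PosSemidef

/-- Strict Loewner order `M < N`. -/
def loewnerLT {ι : Type} [Fintype ι] (M N : Matrix ι ι ℝ) : Prop := (N - M).PosDef

/-- `M` is negative definite. -/
def negDefQ {ι : Type} [Fintype ι] (M : Matrix ι ι ℝ) : Prop := (-M).PosDef

/-- Entrywise Lebesgue integral of a matrix-valued function on `[0,T]`. -/
noncomputable def matIntegral {ι κ : Type} (T : ℝ) (f : ℝ → Matrix ι κ ℝ) : Matrix ι κ ℝ :=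
  Matrix.of fun i j => ∫ t in Set.Ioc (0:ℝ) T, f t i j

/-- `δ • Σ_{k<N} v(kδ) v(kδ)ᵀ`. -/
noncomputable def sampledGram {ι : Type} [Fintype ι] (δ : ℝ) (N : ℕ) (v : ℝ → ι → ℝ) :
    Matrix ι ι ℝ :=
  δ • ∑ k ∈ Finset.range N, Matrix.vecMulVec (v (k * δ)) (v (k * δ))

/-- The noise signal `ẋ − Ax − Bu` associated with a candidate system `(A,B)`. -/
def noiseSig {n m : ℕ} (xdot x : ℝ → Fin n → ℝ) (u : ℝ → Fin m → ℝ)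
    (A : Matrix (Fin n) (Fin n) ℝ) (B : Matrix (Fin n) (Fin m) ℝ) : ℝ → Fin n → ℝ :=
  fun t => xdot t - A.mulVec (x t) - B.mulVec (u t)

/-- `Σ(Q')`: systems consistent with the continuous-time data. -/
def SigmaCont {n m : ℕ} (T : ℝ) (xdot x : ℝ → Fin n → ℝ) (u : ℝ → Fin m → ℝ)
    (Q' : Matrix (Fin n) (Fin n) ℝ) :
    Set (Matrix (Fin n) (Fin n) ℝ × Matrix (Fin n) (Fin m) ℝ) :=
  { AB | loewnerLE (matIntegral T fun t =>
      Matrix.vecMulVec (noiseSig xdot x u AB.1 AB.2 t) (noiseSig xdot x u AB.1 AB.2 t)) Q' }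

/-- `Σ^δ(Q')`: systems consistent with the data sampled at stepsize `δ` (with `N = T/δ` samples). -/
def SigmaDisc {n m : ℕ} (δ : ℝ) (N : ℕ) (xdot x : ℝ → Fin n → ℝ) (u : ℝ → Fin m → ℝ)
    (Q' : Matrix (Fin n) (Fin n) ℝ) :
    Set (Matrix (Fin n) (Fin n) ℝ × Matrix (Fin n) (Fin m) ℝ) :=
  { AB | loewnerLE (sampledGram δ N (noiseSig xdot x u AB.1 AB.2)) Q' }

/-- `M^L_{x,u}`: systems whose associated noise is `L`-square Lipschitz. -/
def Mset {n m : ℕ} (T L : ℝ) (xdot x : ℝ → Fin n → ℝ) (u : ℝ → Fin m → ℝ) :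
    Set (Matrix (Fin n) (Fin n) ℝ × Matrix (Fin n) (Fin m) ℝ) :=
  { AB | SqLipschitz T L (noiseSig xdot x u AB.1 AB.2) }

/-- `N^L_{x,u}`: systems whose associated noise has total square variation at most `LT/2`. -/
def Nset {n m : ℕ} (T L : ℝ) (xdot x : ℝ → Fin n → ℝ) (u : ℝ → Fin m → ℝ) :
    Set (Matrix (Fin n) (Fin n) ℝ × Matrix (Fin n) (Fin m) ℝ) :=
  { AB | TotalSqVarLE T (noiseSig xdot x u AB.1 AB.2) (L * T / 2) }

/-- The stacked signal `ξ(t) = (ẋ(t); −x(t); −u(t))`. -/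
def xiSig {n m : ℕ} (xdot x : ℝ → Fin n → ℝ) (u : ℝ → Fin m → ℝ) (t : ℝ) :
    (Fin n ⊕ (Fin n ⊕ Fin m)) → ℝ :=
  Sum.elim (xdot t) (Sum.elim (fun i => -(x t i)) (fun j => -(u t j)))

/-- The block matrix `[[Q + βI, P, PKᵀ], [P, 0, 0], [KP, 0, 0]]`. -/
noncomputable def lmiBlock {n m : ℕ} (Q P : Matrix (Fin n) (Fin n) ℝ)
    (K : Matrix (Fin m) (Fin n) ℝ) (β : ℝ) :
    Matrix (Fin n ⊕ (Fin n ⊕ Fin m)) (Fin n ⊕ (Fin n ⊕ Fin m)) ℝ :=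
  Matrix.fromBlocks (Q + β • (1 : Matrix (Fin n) (Fin n) ℝ))
    (Matrix.of fun i jj => Sum.elim (fun j => P i j) (fun j => (P * K.transpose) i j) jj)
    (Matrix.of fun ii j => Sum.elim (fun i => P i j) (fun k => (K * P) k j) ii)
    0

/-- The continuous-data LMI. -/
def ContLMI {n m : ℕ} (T : ℝ) (xdot x : ℝ → Fin n → ℝ) (u : ℝ → Fin m → ℝ)
    (Q P : Matrix (Fin n) (Fin n) ℝ) (K : Matrix (Fin m) (Fin n) ℝ) (β : ℝ) : Prop :=
  (matIntegral T (fun t => Matrix.vecMulVec (xiSig xdot x u t) (xiSig xdot x u t)) -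
    lmiBlock Q P K β).PosSemidef

/-- The sampled-data LMI at stepsize `δ` (with `N = T/δ` samples). -/
def SampLMI {n m : ℕ} (δ : ℝ) (N : ℕ) (xdot x : ℝ → Fin n → ℝ) (u : ℝ → Fin m → ℝ)
    (Q P : Matrix (Fin n) (Fin n) ℝ) (K : Matrix (Fin m) (Fin n) ℝ) (β : ℝ) : Prop :=
  (sampledGram δ N (xiSig xdot x u) - lmiBlock Q P K β).PosSemidef

lemma loewnerLE_trans {ι : Type} [Fintype ι] {M N P : Matrix ι ι ℝ} (hMN : loewnerLE M N)
    (hNP : loewnerLE N P) : loewnerLE M P := by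
  simpa [loewnerLE] using hNP.add hMN

lemma loewnerLE_add_right {ι : Type} [Fintype ι] {M N : Matrix ι ι ℝ} (h : loewnerLE M N)
    (P : Matrix ι ι ℝ) : loewnerLE (M + P) (N + P) := by
  simpa [loewnerLE] using h

lemma isHermitian_matIntegral_vecMulVec {ι : Type} (T : ℝ) (v : ℝ → ι → ℝ) :
    (matIntegral T fun t => vecMulVec (v t) (v t)).IsHermitian := by
  ext i j
  simp [matIntegral, vecMulVec_apply, mul_comm]

section Quadratic

variable {ι : Type} [Fintype ι]

lemma abs_apply_le_opNorm {κ : Type} [Fintype κ] [DecidableEq κ] (M : Matrix ι κ ℝ)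
    (i : ι) (j : κ) : |M i j| ≤ opNorm M :=
  calc |M i j| ≤ ‖toEuclideanLin M (EuclideanSpace.single j 1)‖ := by
        simpa using PiLp.norm_apply_le (toEuclideanLin M (EuclideanSpace.single j 1)) i
    _ ≤ opNorm M := by
        simpa [opNorm] using (LinearMap.toContinuousLinearMap (toEuclideanLin M)).le_opNorm
          (EuclideanSpace.single j 1)

lemma abs_dotProduct_mulVec_le_opNorm [DecidableEq ι] (M : Matrix ι ι ℝ) (y : ι → ℝ) :
    |y ⬝ᵥ M *ᵥ y| ≤ opNorm M * (y ⬝ᵥ y) := by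
  set Y : EuclideanSpace ℝ ι := WithLp.toLp 2 y
  have hquad : y ⬝ᵥ M *ᵥ y = inner ℝ Y (toEuclideanLin M Y) := by
    simp [Y, PiLp.inner_apply, dotProduct, mul_comm]
  have hnorm : ‖Y‖ ^ 2 = y ⬝ᵥ y := by
    rw [EuclideanSpace.norm_sq_eq]; simp [Y, dotProduct, sq]
  calc |y ⬝ᵥ M *ᵥ y| ≤ ‖Y‖ * ‖LinearMap.toContinuousLinearMap (toEuclideanLin M) Y‖ := by
        rw [hquad]; exact abs_real_inner_le_norm _ _
    _ ≤ ‖Y‖ * (opNorm M * ‖Y‖) := by gcongr; exact ContinuousLinearMap.le_opNorm _ _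
    _ = opNorm M * (y ⬝ᵥ y) := by rw [← hnorm]; ring

lemma dotProduct_vecMulVec_mulVec (v y : ι → ℝ) :
    y ⬝ᵥ vecMulVec v v *ᵥ y = (v ⬝ᵥ y) ^ 2 := by
  rw [vecMulVec_mulVec]
  simp [dotProduct_comm y v, sq]

lemma isHermitian_sampledGram (δ : ℝ) (N : ℕ) (v : ℝ → ι → ℝ) :
    (sampledGram δ N v).IsHermitian := by
  ext i j
  simp [sampledGram, Matrix.sum_apply, vecMulVec_apply, mul_comm]

lemma dotProduct_sampledGram_mulVec (δ : ℝ) (N : ℕ) (v : ℝ → ι → ℝ) (y : ι → ℝ) :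
    y ⬝ᵥ sampledGram δ N v *ᵥ y = δ * ∑ k ∈ Finset.range N, (v (k * δ) ⬝ᵥ y) ^ 2 := by
  rw [sampledGram, smul_mulVec, dotProduct_smul, smul_eq_mul, sum_mulVec, dotProduct_sum]
  simp only [dotProduct_vecMulVec_mulVec]

lemma dotProduct_matIntegral_mulVec {T : ℝ} {f : ℝ → Matrix ι ι ℝ}
    (hf : ∀ i j, IntegrableOn (fun t => f t i j) (Set.Ioc 0 T)) (y : ι → ℝ) :
    y ⬝ᵥ matIntegral T f *ᵥ y = ∫ t in Set.Ioc 0 T, y ⬝ᵥ f t *ᵥ y := by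
  simp only [dotProduct, mulVec, matIntegral, of_apply]
  rw [integral_finsetSum _ fun i _ => (integrable_finsetSum _ fun j _ =>
    (hf i j).mul_const (y j)).const_mul (y i)]
  refine Finset.sum_congr rfl fun i _ => ?_
  rw [integral_const_mul, integral_finsetSum _ fun j _ => (hf i j).mul_const (y j)]
  simp only [integral_mul_const]

end Quadratic

open intervalIntegral in
lemma mul_le_intervalIntegral_add {g : ℝ → ℝ} {a b K : ℝ} (hab : a ≤ b)
    (hg : IntervalIntegrable g volume a b) (hK : ∀ t ∈ Set.Icc a b, g a ≤ g t + K * (t - a)) :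
    (b - a) * g a ≤ (∫ t in a..b, g t) + K * (b - a) ^ 2 / 2 := by
  have hlin : IntervalIntegrable (fun t => K * (t - a)) volume a b :=
    (continuous_const.mul (continuous_id.sub continuous_const)).intervalIntegrable a b
  calc (b - a) * g a = ∫ _ in a..b, g a := by simp
    _ ≤ ∫ t in a..b, (g t + K * (t - a)) :=
      integral_mono_on hab intervalIntegrable_const (hg.add hlin) hK
    _ = (∫ t in a..b, g t) + K * (b - a) ^ 2 / 2 := by
      rw [integral_add hg hlin, intervalIntegral.integral_const_mul, integral_comp_sub_right (fun t => t) a,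
        integral_id]
      ring

lemma mul_sum_le_intervalIntegral_add {g : ℝ → ℝ} {δ K : ℝ} {N : ℕ} (hδ : 0 ≤ δ)
    (hg : IntervalIntegrable g volume 0 (N * δ))
    (hK : ∀ s ∈ Set.Icc 0 (N * δ), ∀ t ∈ Set.Icc s (N * δ), g s ≤ g t + K * (t - s)) :
    δ * ∑ k ∈ Finset.range N, g (k * δ) ≤ (∫ t in 0..(N * δ), g t) + K * δ * (N * δ) / 2 := by
  have hmono : Monotone fun k : ℕ => (k : ℝ) * δ := fun k l hkl =>
    mul_le_mul_of_nonneg_right (Nat.cast_le.2 hkl) hδ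
  have hsub : ∀ k < N, Set.Icc ((k : ℝ) * δ) ((k + 1 : ℕ) * δ) ⊆ Set.Icc 0 (N * δ) := fun k hk =>
    Set.Icc_subset_Icc (by positivity) (hmono hk)
  have hint : ∀ k < N, IntervalIntegrable g volume (k * δ) ((k + 1 : ℕ) * δ) := fun k hk =>
    hg.mono_set (by
      rw [Set.uIcc_of_le (hmono k.le_succ), Set.uIcc_of_le (by positivity)]
      exact hsub k hk)
  calc δ * ∑ k ∈ Finset.range N, g (k * δ)
      = ∑ k ∈ Finset.range N, δ * g (k * δ) := Finset.mul_sum _ _ _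
    _ ≤ ∑ k ∈ Finset.range N, ((∫ t in (k * δ)..((k + 1 : ℕ) * δ), g t) + K * δ ^ 2 / 2) := by
        refine Finset.sum_le_sum fun k hk => ?_
        have hk := Finset.mem_range.1 hk
        have hstep : ((k + 1 : ℕ) : ℝ) * δ - k * δ = δ := by push_cast; ring
        have h := mul_le_intervalIntegral_add (hmono k.le_succ) (hint k hk)
          fun t ht => hK _ (hsub k hk ⟨le_rfl, hmono k.le_succ⟩) t ⟨ht.1, (hsub k hk ht).2⟩
        rwa [hstep] at h
    _ = (∫ t in 0..(N * δ), g t) + K * δ * (N * δ) / 2 := by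
        rw [Finset.sum_add_distrib, intervalIntegral.sum_integral_adjacent_intervals hint]
        simp only [CharP.cast_eq_zero, zero_mul, Finset.sum_const, Finset.card_range,
          nsmul_eq_mul, add_right_inj]
        ring

namespace SqLipschitz

variable {ι : Type} [Fintype ι] [DecidableEq ι] {T L : ℝ} {v : ℝ → ι → ℝ}

lemma abs_sq_dotProduct_sub_le (hv : SqLipschitz T L v) (y : ι → ℝ)
    {s t : ℝ} (hs : s ∈ Set.Icc 0 T) (ht : t ∈ Set.Icc 0 T) :
    |(v s ⬝ᵥ y) ^ 2 - (v t ⬝ᵥ y) ^ 2| ≤ L * (y ⬝ᵥ y) * |s - t| := by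
  have hy : 0 ≤ y ⬝ᵥ y := by simpa using dotProduct_star_self_nonneg y
  rw [← dotProduct_vecMulVec_mulVec, ← dotProduct_vecMulVec_mulVec, ← dotProduct_sub,
    ← sub_mulVec]
  calc _ ≤ opNorm (vecMulVec (v s) (v s) - vecMulVec (v t) (v t)) * (y ⬝ᵥ y) :=
        abs_dotProduct_mulVec_le_opNorm _ y
    _ ≤ L * |s - t| * (y ⬝ᵥ y) := by gcongr; exact hv s hs t ht
    _ = L * (y ⬝ᵥ y) * |s - t| := by ring

lemma continuousOn_sq_dotProduct (hv : SqLipschitz T L v) (y : ι → ℝ) :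
    ContinuousOn (fun t => (v t ⬝ᵥ y) ^ 2) (Set.Icc 0 T) :=
  (LipschitzOnWith.of_dist_le' fun s hs t ht => by
    simpa only [Real.dist_eq] using hv.abs_sq_dotProduct_sub_le y hs ht).continuousOn

lemma continuousOn_vecMulVec_apply (hv : SqLipschitz T L v) (i j : ι) :
    ContinuousOn (fun t => vecMulVec (v t) (v t) i j) (Set.Icc 0 T) :=
  (LipschitzOnWith.of_dist_le' fun s hs t ht => by
    simpa only [Real.dist_eq, Matrix.sub_apply] using
      (abs_apply_le_opNorm _ i j).trans (hv s hs t ht)).continuousOn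

lemma sampledGram_loewnerLE {δ : ℝ} {N : ℕ} (hv : SqLipschitz (N * δ) L v) (hδ : 0 < δ) :
    loewnerLE (sampledGram δ N v)
      (matIntegral (N * δ) (fun t => vecMulVec (v t) (v t)) + (δ * (N * δ) * L / 2) • 1) := by
  have hT : (0 : ℝ) ≤ N * δ := by positivity
  refine PosSemidef.of_dotProduct_mulVec_nonneg
    (((isHermitian_matIntegral_vecMulVec _ v).add (isHermitian_one.smul (IsSelfAdjoint.all _))).sub
      (isHermitian_sampledGram δ N v)) fun y => ?_
  have hy : star y = y := rfl
  have hentries i j : IntegrableOn (fun t => vecMulVec (v t) (v t) i j) (Set.Ioc 0 (N * δ)) :=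
    ((hv.continuousOn_vecMulVec_apply i j).integrableOn_Icc).mono_set Set.Ioc_subset_Icc_self
  have hsum := mul_sum_le_intervalIntegral_add (K := L * (y ⬝ᵥ y)) hδ.le
    ((hv.continuousOn_sq_dotProduct y).intervalIntegrable_of_Icc hT)
    fun s hs t ht => by
      have := hv.abs_sq_dotProduct_sub_le y hs ⟨hs.1.trans ht.1, ht.2⟩
      rw [abs_sub_comm s t, abs_of_nonneg (sub_nonneg.2 ht.1)] at this
      linarith [le_abs_self ((v s ⬝ᵥ y) ^ 2 - (v t ⬝ᵥ y) ^ 2)]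
  rw [hy, sub_mulVec, add_mulVec, dotProduct_sub, dotProduct_add, smul_mulVec, one_mulVec,
    dotProduct_smul, smul_eq_mul, dotProduct_matIntegral_mulVec hentries,
    dotProduct_sampledGram_mulVec, ← intervalIntegral.integral_of_le hT]
  simp only [dotProduct_vecMulVec_mulVec]
  linarith [hsum]

end SqLipschitz

theorem stmt9_general
    {n m : ℕ} (T : ℝ)
    (x xdot : ℝ → Fin n → ℝ) (u : ℝ → Fin m → ℝ)
    (Q : Matrix (Fin n) (Fin n) ℝ)
    (As : Matrix (Fin n) (Fin n) ℝ) (Bs : Matrix (Fin n) (Fin m) ℝ)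
    (htrue : (As, Bs) ∈ SigmaCont T xdot x u Q)
    (δ : ℝ) (hδ : 0 < δ) (N : ℕ) (hTN : T = N * δ)
    :
    ∀ L : ℝ, 0 ≤ L →
      (SigmaCont T xdot x u Q ∩ Mset T L xdot x u ⊆
        SigmaDisc δ N xdot x u (Q + (δ * T * L / 2) • (1 : Matrix (Fin n) (Fin n) ℝ))) ∧
      (SqLipschitz T L (noiseSig xdot x u As Bs) →
        (As, Bs) ∈ SigmaCont T xdot x u Q ∩ Mset T L xdot x u) := by
  intro L _
  refine ⟨?_, fun hLip => ⟨htrue, hLip⟩⟩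
  rintro ⟨A, B⟩ ⟨hSigma, hLip⟩
  subst hTN
  exact loewnerLE_trans (SqLipschitz.sampledGram_loewnerLE hLip hδ) (loewnerLE_add_right hSigma _)

theorem stmt9
    {n m : ℕ} (T : ℝ) (hT : 0 < T)
    (x xdot : ℝ → Fin n → ℝ) (u : ℝ → Fin m → ℝ)
    (Q : Matrix (Fin n) (Fin n) ℝ) (hQ : Q.PosSemidef)
    (hxdotL2 : MeasureTheory.MemLp xdot 2 (MeasureTheory.volume.restrict (Set.Icc (0:ℝ) T)))
    (huL2 : MeasureTheory.MemLp u 2 (MeasureTheory.volume.restrict (Set.Icc (0:ℝ) T)))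
    (hAC : ∀ t ∈ Set.Icc (0:ℝ) T, ∀ i, x t i = x 0 i + ∫ s in (0:ℝ)..t, xdot s i)
    (As : Matrix (Fin n) (Fin n) ℝ) (Bs : Matrix (Fin n) (Fin m) ℝ)
    (htrue : (As, Bs) ∈ SigmaCont T xdot x u Q)
    (δ : ℝ) (hδ : 0 < δ) (N : ℕ) (hN : 0 < N) (hTN : T = N * δ)
    :
    ∀ L : ℝ, 0 ≤ L →
      (SigmaCont T xdot x u Q ∩ Mset T L xdot x u ⊆
        SigmaDisc δ N xdot x u (Q + (δ * T * L / 2) • (1 : Matrix (Fin n) (Fin n) ℝ))) ∧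
      (SqLipschitz T L (noiseSig xdot x u As Bs) →
        (As, Bs) ∈ SigmaCont T xdot x u Q ∩ Mset T L xdot x u) :=
  stmt9_general T x xdot u Q As Bs htrue δ hδ N hTN
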